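/- Let Σ be a finite set, |Σ| = n ≥ 1, E finite, C : E → P(Σ) with each C(e) nonempty, ω : E → ℝ. Define uPSD : P(Σ) → ℝ by uPSD(X) = Σ_{e : X ∩ C(e) ≠ ∅ and X ⊄ C(e)} ω(e) (i.e., arcs e with X ∩ C(e) ≠ ∅ and X not a subset of C(e)). Then for every a ∈ Σ with |C(e)| < n for all e with a ∉ C(e), the Shapley value of uPSD on a equals (1/n)·Σ_{e : a ∈ C(e)} ((n−|C(e)|)/|C(e)|)·ω(e) + (1/n)·Σ_{e : a ∉ C(e)} (|C(e)|/(n−|C(e)|))·ω(e). -/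

import Mathlib

/-!
For a single edge with cluster `c`, the marginal contribution of `a` to a coalition `X ∋ a` is `1`
exactly when `X \ {a}` is a nonempty subset of the side of the cut not containing `a` (namely `cᶜ`
if `a ∈ c` and `c` otherwise), and `0` otherwise. Summing the Shapley weights over the coalitions
`X ∋ a` with `X \ {a} ⊆ D` gives `1 / (n - |D|)`, the probability that in a uniformly random
ordering all predecessors of `a` lie in `D`; removing the coalition `{a}` leaves
`1 / (n - |D|) - 1 / n`. The theorem follows by linearity of the Shapley value in the game.
-/

open Finset Nat

theorem Nat.succ_mul_sum_choose_mul_factorial (m k : ℕ) :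
    (k + 1) * ∑ j ∈ range (m + 1), m.choose j * j ! * (m + k - j)! = (m + k + 1)! := by
  have hterm : ∀ i ∈ range (m + 1),
      m.choose (m - i) * (m - i)! * (m + k - (m - i))! = m ! * k ! * (i + k).choose k := by
    intro i hi
    have hi : i ≤ m := Nat.lt_succ_iff.mp (mem_range.mp hi)
    have hsub : m + k - (m - i) = i + k := by omega
    rw [hsub]
    apply Nat.eq_of_mul_eq_mul_right (Nat.factorial_pos i)
    calc m.choose (m - i) * (m - i)! * (i + k)! * i !
        = (m.choose (m - i) * (m - i)! * (m - (m - i))!) * (i + k)! := by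
          rw [Nat.sub_sub_self hi]; ring
      _ = m ! * ((i + k).choose k * i ! * k !) := by
          rw [Nat.choose_mul_factorial_mul_factorial (Nat.sub_le m i),
            Nat.add_choose_mul_factorial_mul_factorial]
      _ = m ! * k ! * (i + k).choose k * i ! := by ring
  -- after reflecting `j ↦ m - j` the sum is a hockey stick
  rw [← sum_range_reflect]
  simp only [Nat.add_sub_cancel]
  rw [sum_congr rfl hterm, ← mul_sum, Nat.sum_range_add_choose]
  calc (k + 1) * (m ! * k ! * (m + k + 1).choose (k + 1))
      = (m + (k + 1)).choose (k + 1) * m ! * (k + 1)! := by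
        rw [Nat.factorial_succ, ← add_assoc]; ring
    _ = (m + k + 1)! := Nat.add_choose_mul_factorial_mul_factorial m (k + 1)

theorem sum_choose_mul_factorial_div_factorial {m n : ℕ} (h : m < n) :
    ∑ j ∈ range (m + 1), (m.choose j : ℝ) * (j ! * (n - 1 - j)! / n !) = 1 / (n - m : ℕ) := by
  obtain ⟨k, rfl⟩ : ∃ k, n = m + k + 1 := ⟨n - m - 1, by omega⟩
  have hsum := congrArg (Nat.cast : ℕ → ℝ) (Nat.succ_mul_sum_choose_mul_factorial m k)
  push_cast at hsum
  simp_rw [Nat.add_sub_cancel, ← mul_div_assoc, ← mul_assoc]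
  have hS : ∑ j ∈ range (m + 1), (m.choose j : ℝ) * j ! * (m + k - j)! ≠ 0 :=
    right_ne_zero_of_mul (by rw [hsum]; positivity)
  rw [← sum_div, show m + k + 1 - m = k + 1 by omega, ← hsum, Nat.cast_succ, mul_comm,
    ← div_div, div_self hS]

section Shapley

variable {α : Type*} [Fintype α] [DecidableEq α]

noncomputable def shapleyWeight (n k : ℕ) : ℝ := ((k - 1)! * (n - k)! : ℝ) / n !

noncomputable def shapleyValue (v : Finset α → ℝ) (a : α) : ℝ :=
  ∑ X ∈ univ.powerset.filter (fun X => a ∈ X),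
    shapleyWeight (Fintype.card α) X.card * (v X - v (X.erase a))

theorem shapleyValue_sum {ι : Type*} (s : Finset ι) (v : ι → Finset α → ℝ) (a : α) :
    shapleyValue (fun X => ∑ i ∈ s, v i X) a = ∑ i ∈ s, shapleyValue (v i) a := by
  simp only [shapleyValue, ← sum_sub_distrib, mul_sum]
  exact sum_comm

theorem shapleyValue_const_mul (r : ℝ) (v : Finset α → ℝ) (a : α) :
    shapleyValue (fun X => r * v X) a = r * shapleyValue v a := by
  simp only [shapleyValue, ← mul_sub, mul_sum]
  exact sum_congr rfl fun _ _ => mul_left_comm _ _ _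

theorem sum_shapleyWeight_erase_subset {a : α} {D : Finset α} (haD : a ∉ D) :
    ∑ X ∈ univ.powerset.filter (fun X => a ∈ X),
      shapleyWeight (Fintype.card α) X.card * (if X.erase a ⊆ D then 1 else 0)
      = 1 / (Fintype.card α - D.card : ℕ) := by
  simp only [mul_ite, mul_one, mul_zero]
  rw [← sum_filter, filter_filter]
  calc _ = ∑ Y ∈ D.powerset, shapleyWeight (Fintype.card α) (Y.card + 1) := by
        refine sum_nbij' (·.erase a) (insert a ·) ?_ ?_ ?_ ?_ ?_
        · intro X hX
          simp_all
        · intro Y hY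
          simpa using (erase_subset a Y).trans (mem_powerset.mp hY)
        · intro X hX
          exact insert_erase (mem_filter.mp hX).2.1
        · intro Y hY
          exact erase_insert fun haY => haD (mem_powerset.mp hY haY)
        · intro X hX
          rw [card_erase_of_mem (mem_filter.mp hX).2.1,
            Nat.sub_add_cancel (card_pos.mpr ⟨a, (mem_filter.mp hX).2.1⟩)]
    _ = _ := by
        simp only [shapleyWeight, Nat.add_sub_cancel, ← Nat.sub_sub, Nat.sub_right_comm _ _ 1]
        rw [sum_powerset_apply_card (fun j => ((j ! * (Fintype.card α - 1 - j)! : ℝ) / _)),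
          ← sum_choose_mul_factorial_div_factorial (card_lt_univ_of_notMem haD)]
        simp only [nsmul_eq_mul]

noncomputable def splitIndicator (c X : Finset α) : ℝ :=
  if (X ∩ c).Nonempty ∧ ¬ X ⊆ c then 1 else 0

theorem splitIndicator_sub_erase_of_mem {a : α} {c X : Finset α} (hac : a ∈ c) (haX : a ∈ X) :
    splitIndicator c X - splitIndicator c (X.erase a)
      = if (X.erase a).Nonempty ∧ X.erase a ⊆ cᶜ then 1 else 0 := by
  simp only [splitIndicator, Finset.Nonempty, subset_iff, mem_inter, mem_erase, mem_compl]
  split_ifs <;> grind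

theorem splitIndicator_sub_erase_of_notMem {a : α} {c X : Finset α} (hac : a ∉ c) (haX : a ∈ X) :
    splitIndicator c X - splitIndicator c (X.erase a)
      = if (X.erase a).Nonempty ∧ X.erase a ⊆ c then 1 else 0 := by
  simp only [splitIndicator, Finset.Nonempty, subset_iff, mem_inter, mem_erase]
  split_ifs <;> grind

theorem shapleyValue_eq_of_marginal {v : Finset α → ℝ} {a : α} {D : Finset α} (haD : a ∉ D)
    (hv : ∀ X, a ∈ X →
      v X - v (X.erase a) = if (X.erase a).Nonempty ∧ X.erase a ⊆ D then 1 else 0) :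
    shapleyValue v a = 1 / (Fintype.card α - D.card : ℕ) - 1 / Fintype.card α := by
  have hind : ∀ Y : Finset α, (if Y.Nonempty ∧ Y ⊆ D then (1 : ℝ) else 0)
      = (if Y ⊆ D then 1 else 0) - (if Y ⊆ ∅ then 1 else 0) := by
    intro Y
    by_cases hY : Y = ∅ <;> simp [hY, nonempty_iff_ne_empty]
  rw [shapleyValue, sum_congr rfl fun X hX => by rw [hv X (mem_filter.mp hX).2, hind]]
  simp only [mul_sub, sum_sub_distrib]
  rw [sum_shapleyWeight_erase_subset haD, sum_shapleyWeight_erase_subset (notMem_empty a),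
    card_empty, Nat.sub_zero]

theorem shapleyValue_splitIndicator_of_mem {a : α} {c : Finset α} (hac : a ∈ c) :
    shapleyValue (splitIndicator c) a
      = 1 / Fintype.card α * ((Fintype.card α - c.card : ℕ) / c.card) := by
  rw [shapleyValue_eq_of_marginal (notMem_compl.mpr hac)
    (fun X hX => splitIndicator_sub_erase_of_mem hac hX), card_compl,
    Nat.sub_sub_self (card_le_univ c), Nat.cast_sub (card_le_univ c)]
  have hc : (c.card : ℝ) ≠ 0 := Nat.cast_ne_zero.mpr (card_pos.mpr ⟨a, hac⟩).ne'
  have hn : (Fintype.card α : ℝ) ≠ 0 := Nat.cast_ne_zero.mpr (Fintype.card_pos_iff.mpr ⟨a⟩).ne'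
  field_simp

theorem shapleyValue_splitIndicator_of_notMem {a : α} {c : Finset α} (hac : a ∉ c) :
    shapleyValue (splitIndicator c) a
      = 1 / Fintype.card α * (c.card / (Fintype.card α - c.card : ℕ)) := by
  have hcn := card_lt_univ_of_notMem hac
  rw [shapleyValue_eq_of_marginal hac (fun X hX => splitIndicator_sub_erase_of_notMem hac hX),
    Nat.cast_sub hcn.le]
  have hnc : (Fintype.card α : ℝ) - c.card ≠ 0 := sub_ne_zero.mpr (by exact_mod_cast hcn.ne')
  have hn : (Fintype.card α : ℝ) ≠ 0 := Nat.cast_ne_zero.mpr (Fintype.card_pos_iff.mpr ⟨a⟩).ne'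
  field_simp
  ring

end Shapley

theorem stmt_5_general {α E : Type*} [Fintype α] [DecidableEq α] [Fintype E]
    (C : E → Finset α) (ω : E → ℝ)
    (a : α) :
    ∑ X ∈ univ.powerset.filter (fun X => a ∈ X),
      (((X.card - 1).factorial * (Fintype.card α - X.card).factorial : ℝ) /
        (Fintype.card α).factorial) *
      ((∑ e ∈ univ.filter (fun e => (X ∩ C e).Nonempty ∧ ¬ X ⊆ C e), ω e) -
       (∑ e ∈ univ.filter (fun e => ((X.erase a) ∩ C e).Nonempty ∧ ¬ (X.erase a) ⊆ C e), ω e)) =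
    (1 / (Fintype.card α : ℝ)) *
        ∑ e ∈ univ.filter (fun e => a ∈ C e),
          (((Fintype.card α - (C e).card : ℕ) : ℝ) / (C e).card) * ω e +
      (1 / (Fintype.card α : ℝ)) *
        ∑ e ∈ univ.filter (fun e => a ∉ C e),
          (((C e).card : ℝ) / ((Fintype.card α - (C e).card : ℕ) : ℝ)) * ω e := by
  have hgame : (fun X => ∑ e ∈ univ.filter (fun e => (X ∩ C e).Nonempty ∧ ¬ X ⊆ C e), ω e)
      = fun X => ∑ e, ω e * splitIndicator (C e) X := by
    funext X
    simp only [sum_filter, splitIndicator, mul_ite, mul_one, mul_zero]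
  show shapleyValue _ a = _
  rw [hgame, shapleyValue_sum]
  simp only [shapleyValue_const_mul]
  rw [← sum_filter_add_sum_filter_not univ (fun e => a ∈ C e), mul_sum, mul_sum]
  congr 1 <;> refine sum_congr rfl fun e he => ?_
  · rw [shapleyValue_splitIndicator_of_mem (mem_filter.mp he).2]
    ring
  · rw [shapleyValue_splitIndicator_of_notMem (mem_filter.mp he).2]
    ring

theorem stmt_5 {α E : Type*} [Fintype α] [DecidableEq α] [Fintype E]
    (hn : 1 ≤ Fintype.card α)
    (C : E → Finset α) (hC : ∀ e, (C e).Nonempty) (ω : E → ℝ)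
    (a : α) (ha : ∀ e, a ∉ C e → (C e).card < Fintype.card α) :
    ∑ X ∈ univ.powerset.filter (fun X => a ∈ X),
      (((X.card - 1).factorial * (Fintype.card α - X.card).factorial : ℝ) /
        (Fintype.card α).factorial) *
      ((∑ e ∈ univ.filter (fun e => (X ∩ C e).Nonempty ∧ ¬ X ⊆ C e), ω e) -
       (∑ e ∈ univ.filter (fun e => ((X.erase a) ∩ C e).Nonempty ∧ ¬ (X.erase a) ⊆ C e), ω e)) =
    (1 / (Fintype.card α : ℝ)) *
        ∑ e ∈ univ.filter (fun e => a ∈ C e),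
          (((Fintype.card α - (C e).card : ℕ) : ℝ) / (C e).card) * ω e +
      (1 / (Fintype.card α : ℝ)) *
        ∑ e ∈ univ.filter (fun e => a ∉ C e),
          (((C e).card : ℝ) / ((Fintype.card α - (C e).card : ℕ) : ℝ)) * ω e :=
  stmt_5_general C ω a
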